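/- arXiv:2311.18324 — 4 statements merged into one kernel-verified Lean document; each statement's English description precedes it below -/
import Mathlib

section
/- Let V be a real inner product space, let V₀, V₁, …, V_d ∈ V be pairwise orthogonal vectors, and set 𝒱 = ∑_{k=0}^d V_k. Suppose P is a map satisfying the quasi-optimality bound ‖W − P(W)‖ ≤ √d · inf_{Z ∈ S} ‖W − Z‖ for some set S containing all the points X + V_k (k = 0,…,d), where X ∈ V is fixed and W = X + 𝒱. Then ‖X − P(X + 𝒱)‖ ≤ (1 + d/√(d+1))·‖𝒱‖. -/
open scoped RealInnerProductSpace

/-- retraction bound from quasi-optimality of the projection. -/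
theorem stmt4 {E : Type*} [NormedAddCommGroup E] [InnerProductSpace ℝ E]
    (d : ℕ) (V : Fin (d + 1) → E)
    (horth : ∀ i j, i ≠ j → ⟪V i, V j⟫ = 0)
    (X : E) (S : Set E) (P : E → E)
    (hS : ∀ k : Fin (d + 1), X + V k ∈ S)
    (hquasi : ‖(X + ∑ k, V k) - P (X + ∑ k, V k)‖
        ≤ Real.sqrt d * ⨅ Z : S, ‖(X + ∑ k, V k) - (Z : E)‖) :
    ‖X - P (X + ∑ k, V k)‖ ≤ (1 + (d : ℝ) / Real.sqrt (d + 1)) * ‖∑ k, V k‖ := by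
  -- Pythagoras for any subset
  have hsum : ∀ s : Finset (Fin (d + 1)),
      ‖∑ j ∈ s, V j‖ ^ 2 = ∑ j ∈ s, ‖V j‖ ^ 2 := by
    intro s
    have h : ⟪∑ j ∈ s, V j, ∑ j ∈ s, V j⟫ = ∑ j ∈ s, ‖V j‖ ^ 2 := by
      rw [sum_inner]
      refine Finset.sum_congr rfl fun i hi => ?_
      rw [inner_sum, Finset.sum_eq_single i]
      · exact real_inner_self_eq_norm_sq _
      · intro j _ hji; exact horth i j (Ne.symm hji)
      · intro h; exact absurd hi h
    rw [← real_inner_self_eq_norm_sq, h]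
  set 𝒱 := ∑ k, V k with h𝒱
  -- pick k maximizing ‖V k‖²
  obtain ⟨k, -, hk⟩ := Finset.exists_max_image Finset.univ (fun j => ‖V j‖ ^ 2)
    ⟨0, Finset.mem_univ 0⟩
  have hkmax : ∀ j, ‖V j‖ ^ 2 ≤ ‖V k‖ ^ 2 := fun j => hk j (Finset.mem_univ j)
  have htot : ‖𝒱‖ ^ 2 = ∑ j, ‖V j‖ ^ 2 := hsum Finset.univ
  have havg : ‖𝒱‖ ^ 2 ≤ (d + 1 : ℝ) * ‖V k‖ ^ 2 := by
    rw [htot]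
    calc ∑ j, ‖V j‖ ^ 2 ≤ ∑ _j : Fin (d + 1), ‖V k‖ ^ 2 :=
          Finset.sum_le_sum fun j _ => hkmax j
      _ = (d + 1 : ℝ) * ‖V k‖ ^ 2 := by
          simp [Finset.sum_const, mul_comm]
  have hrest : ‖∑ j ∈ Finset.univ.erase k, V j‖ ^ 2 ≤ (d : ℝ) / (d + 1) * ‖𝒱‖ ^ 2 := by
    rw [hsum]
    have h1 : ∑ j ∈ Finset.univ.erase k, ‖V j‖ ^ 2 = ‖𝒱‖ ^ 2 - ‖V k‖ ^ 2 := by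
      rw [htot, ← Finset.sum_erase_add _ _ (Finset.mem_univ k)]; ring
    have hd1 : (0 : ℝ) < d + 1 := by positivity
    rw [h1]
    have : ‖𝒱‖ ^ 2 / (d + 1) ≤ ‖V k‖ ^ 2 := by
      rw [div_le_iff₀ hd1]
      linarith [havg]
    have : ‖𝒱‖ ^ 2 - ‖V k‖ ^ 2 ≤ ‖𝒱‖ ^ 2 - ‖𝒱‖ ^ 2 / (d + 1) := by linarith
    calc ‖𝒱‖ ^ 2 - ‖V k‖ ^ 2 ≤ ‖𝒱‖ ^ 2 - ‖𝒱‖ ^ 2 / (d + 1) := this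
      _ = (d : ℝ) / (d + 1) * ‖𝒱‖ ^ 2 := by field_simp; ring
  -- distance from W to X + V k
  have hdist : ‖(X + 𝒱) - (X + V k)‖ ^ 2 ≤ (d : ℝ) / (d + 1) * ‖𝒱‖ ^ 2 := by
    have : (X + 𝒱) - (X + V k) = ∑ j ∈ Finset.univ.erase k, V j := by
      rw [h𝒱, ← Finset.sum_erase_add _ _ (Finset.mem_univ k)]
      abel
    rw [this]; exact hrest
  have hinf : (⨅ Z : S, ‖(X + 𝒱) - (Z : E)‖) ≤ ‖(X + 𝒱) - (X + V k)‖ := by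
    have hbdd : BddBelow (Set.range fun Z : S => ‖(X + 𝒱) - (Z : E)‖) := by
      refine ⟨0, ?_⟩
      rintro y ⟨z, rfl⟩
      exact norm_nonneg _
    exact ciInf_le hbdd ⟨X + V k, hS k⟩
  have hdle : ‖(X + 𝒱) - (X + V k)‖ ≤ Real.sqrt ((d : ℝ) / (d + 1)) * ‖𝒱‖ := by
    have h2 : ‖(X + 𝒱) - (X + V k)‖ ^ 2 ≤ (Real.sqrt ((d : ℝ) / (d + 1)) * ‖𝒱‖) ^ 2 := by
      rw [mul_pow, Real.sq_sqrt (by positivity)]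
      exact hdist
    have := Real.sqrt_le_sqrt h2
    rwa [Real.sqrt_sq (norm_nonneg _), Real.sqrt_sq (by positivity)] at this
  have hstep : ‖(X + 𝒱) - P (X + 𝒱)‖ ≤ (d : ℝ) / Real.sqrt (d + 1) * ‖𝒱‖ := by
    have h1 : ‖(X + 𝒱) - P (X + 𝒱)‖ ≤ Real.sqrt d * (Real.sqrt ((d : ℝ) / (d + 1)) * ‖𝒱‖) :=
      hquasi.trans (mul_le_mul_of_nonneg_left (hinf.trans hdle) (Real.sqrt_nonneg _))
    have heq : Real.sqrt d * Real.sqrt ((d : ℝ) / (d + 1)) = (d : ℝ) / Real.sqrt (d + 1) := by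
      rw [← Real.sqrt_mul (by positivity), show (d : ℝ) * ((d : ℝ) / (d + 1)) = (d : ℝ) ^ 2 / (d + 1) by ring,
        Real.sqrt_div (by positivity : (0:ℝ) ≤ (d:ℝ)^2), Real.sqrt_sq (by positivity)]
    calc ‖(X + 𝒱) - P (X + 𝒱)‖ ≤ Real.sqrt d * Real.sqrt ((d : ℝ) / (d + 1)) * ‖𝒱‖ := by
          rw [mul_assoc]; exact h1
      _ = (d : ℝ) / Real.sqrt (d + 1) * ‖𝒱‖ := by rw [heq]
  calc ‖X - P (X + 𝒱)‖ = ‖(X - (X + 𝒱)) + ((X + 𝒱) - P (X + 𝒱))‖ := by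
        congr 1; abel
    _ ≤ ‖X - (X + 𝒱)‖ + ‖(X + 𝒱) - P (X + 𝒱)‖ := norm_add_le _ _
    _ = ‖𝒱‖ + ‖(X + 𝒱) - P (X + 𝒱)‖ := by rw [show X - (X + 𝒱) = -𝒱 by abel, norm_neg]
    _ ≤ ‖𝒱‖ + (d : ℝ) / Real.sqrt (d + 1) * ‖𝒱‖ := by linarith [hstep]
    _ = (1 + (d : ℝ) / Real.sqrt (d + 1)) * ‖𝒱‖ := by ring
end

section
/- Let f : ℝ^N → ℝ be bounded below by f*. Suppose a sequence (x_t)_{t≥0} in a set C ⊆ ℝ^N, together with search directions g_t and stepsizes s_t ≥ s_min > 0, satisfies the sufficient decrease condition f(x_t) − f(x_{t+1}) ≥ s_t · a · ⟨−∇f(x_t), g_t⟩ and the angle condition ⟨−∇f(x_t), g_t⟩ ≥ ω · m_t · ‖g_t‖ together with ‖g_t‖ ≥ ω · m_t, where m_t ≥ 0 is a stationarity measure and a, ω ∈ (0,1]. Then m_t → 0 as t → ∞, and for any ε > 0, the number of indices t with m_t ≥ ε is at most f(x_0) − f* divided by s_min · a · ω² · ε². -/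
/-! The angle conditions give `⟪-∇f(x_t), g_t⟫ ≥ (ω m_t)²`, so each step decreases `f` by at least
`c m_t²` with `c = s_min a ω²`. Telescoping against the lower bound `f*` shows that `∑ c m_t²` is
finite and at most `f(x_0) - f*`; hence `m_t → 0`, and at most `(f(x_0) - f*) / (c ε²)` terms
can satisfy `m_t ≥ ε`. -/

open Filter Topology
open scoped RealInnerProductSpace

theorem mul_sq_le_of_sufficient_decrease {smin s a ω m n d Δ : ℝ} (hsmin : 0 ≤ smin) (ha : 0 ≤ a)
    (hω : 0 ≤ ω) (hm : 0 ≤ m) (hs : smin ≤ s) (hangle : ω * m * n ≤ d) (hangle' : ω * m ≤ n)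
    (hdec : s * a * d ≤ Δ) : smin * a * ω ^ 2 * m ^ 2 ≤ Δ := by
  have hd : (ω * m) ^ 2 ≤ d :=
    calc (ω * m) ^ 2 = ω * m * (ω * m) := sq _
      _ ≤ ω * m * n := by gcongr
      _ ≤ d := hangle
  calc smin * a * ω ^ 2 * m ^ 2 = smin * a * (ω * m) ^ 2 := by ring
    _ ≤ smin * a * d := by gcongr
    _ ≤ s * a * d := by gcongr; exact (sq_nonneg _).trans hd
    _ ≤ Δ := hdec

theorem sum_range_le_sub_of_le_sub_succ {u r : ℕ → ℝ} (h : ∀ t, r t ≤ u t - u (t + 1)) (n : ℕ) :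
    ∑ t ∈ Finset.range n, r t ≤ u 0 - u n :=
  (Finset.sum_le_sum fun t _ => h t).trans_eq (Finset.sum_range_sub' u n)

theorem summable_and_tsum_le_of_le_sub_succ {u r : ℕ → ℝ} {L : ℝ} (hr : ∀ t, 0 ≤ r t)
    (hL : ∀ t, L ≤ u t) (h : ∀ t, r t ≤ u t - u (t + 1)) :
    Summable r ∧ ∑' t, r t ≤ u 0 - L := by
  have hbound (n : ℕ) : ∑ t ∈ Finset.range n, r t ≤ u 0 - L :=
    (sum_range_le_sub_of_le_sub_succ h n).trans (by linarith [hL n])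
  exact ⟨summable_of_sum_range_le hr hbound, Real.tsum_le_of_sum_range_le hr hbound⟩

theorem tendsto_zero_of_summable_sq {m : ℕ → ℝ} (h : Summable fun t => m t ^ 2) :
    Tendsto m atTop (𝓝 0) := by
  have hsqrt := h.tendsto_atTop_zero.sqrt
  simp only [Real.sqrt_sq_eq_abs, Real.sqrt_zero] at hsqrt
  exact tendsto_zero_iff_abs_tendsto_zero m |>.2 hsqrt

theorem card_mul_le_tsum {α : Type*} {r : α → ℝ} (hr : ∀ t, 0 ≤ r t) (hsum : Summable r)
    {T : Finset α} {δ : ℝ} (hT : ∀ t ∈ T, δ ≤ r t) : T.card * δ ≤ ∑' t, r t := by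
  rw [← nsmul_eq_mul]
  exact (T.card_nsmul_le_sum r δ hT).trans (hsum.sum_le_tsum T fun t _ => hr t)

/-- abstract global convergence of the gradient-related approximate
projection method: the stationarity measure tends to zero, and the number of
ε-nonstationary iterates is bounded. -/
theorem stmt5 {N : ℕ} (f : EuclideanSpace ℝ (Fin N) → ℝ) (fstar : ℝ)
    (hbdd : ∀ y, fstar ≤ f y)
    (x g : ℕ → EuclideanSpace ℝ (Fin N)) (s m : ℕ → ℝ)
    (smin a ω : ℝ) (hsmin : 0 < smin)
    (ha : 0 < a ∧ a ≤ 1) (hω : 0 < ω ∧ ω ≤ 1)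
    (hs : ∀ t, smin ≤ s t) (hm : ∀ t, 0 ≤ m t)
    (hdec : ∀ t, s t * a * ⟪-gradient f (x t), g t⟫ ≤ f (x t) - f (x (t + 1)))
    (hangle : ∀ t, ω * m t * ‖g t‖ ≤ ⟪-gradient f (x t), g t⟫)
    (hangle' : ∀ t, ω * m t ≤ ‖g t‖) :
    Filter.Tendsto m Filter.atTop (nhds 0) ∧
    ∀ ε : ℝ, 0 < ε → ∀ T : Finset ℕ, (∀ t ∈ T, ε ≤ m t) →
      (T.card : ℝ) ≤ (f (x 0) - fstar) / (smin * a * ω ^ 2 * ε ^ 2) := by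
  obtain ⟨ha, -⟩ := ha
  obtain ⟨hω, -⟩ := hω
  have hc : 0 < smin * a * ω ^ 2 := by positivity
  have hstep (t : ℕ) : smin * a * ω ^ 2 * m t ^ 2 ≤ f (x t) - f (x (t + 1)) :=
    mul_sq_le_of_sufficient_decrease hsmin.le ha.le hω.le (hm t) (hs t) (hangle t) (hangle' t)
      (hdec t)
  obtain ⟨hsum, htsum⟩ := summable_and_tsum_le_of_le_sub_succ (fun t => by positivity)
    (fun t => hbdd (x t)) hstep
  refine ⟨tendsto_zero_of_summable_sq ((summable_mul_left_iff hc.ne').1 hsum),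
    fun ε hε T hT => ?_⟩
  rw [le_div_iff₀ (by positivity)]
  calc (T.card : ℝ) * (smin * a * ω ^ 2 * ε ^ 2)
      ≤ ∑' t, smin * a * ω ^ 2 * m t ^ 2 :=
        card_mul_le_tsum (fun t => by positivity) hsum fun t ht => by
          gcongr; exact hT t ht
    _ ≤ f (x 0) - fstar := htsum
end

section
/- Let A ∈ ℝ^{m×n} have SVD A = ∑_{k=1}^I σ_k u_k v_kᵀ with σ₁ ≥ ⋯ ≥ σ_I > 0 and I > r. Then X* = ∑_{k=1}^r σ_k u_k v_kᵀ is a minimizer of ‖A − X‖_F over all matrices X ∈ ℝ^{m×n} with rank(X) ≤ r, and the minimum value satisfies ‖A − X*‖_F² = ∑_{k=r+1}^I σ_k². -/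
/-!
Let `K` be the column space of `X`, so `dim K ≤ r`, and put `t k = ‖P_K u_k‖²`, where `P_K` is
the orthogonal projection onto `K`. Then `0 ≤ t k ≤ 1` and, by Bessel's inequality for `u`
applied to each vector of an orthonormal basis of `K`, `∑ t k ≤ dim K ≤ r`. As
`(A - X) v_k = σ_k u_k - X v_k` with `X v_k ∈ K`, we get `‖(A - X) v_k‖² ≥ σ_k² (1 - t k)`, and
Bessel's inequality for the rows of `A - X` gives `‖A - X‖_F² ≥ ∑ ‖(A - X) v_k‖²`. Since the
`σ_k²` decrease, any such weights satisfy `∑ σ_k² (1 - t k) ≥ ∑_{k ≥ r} σ_k²`, which is the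
error of the truncated SVD.
-/

open Matrix Finset

noncomputable def frob {p q : ℕ} (M : Matrix (Fin p) (Fin q) ℝ) : ℝ :=
  Real.sqrt (Matrix.trace (Mᵀ * M))

open WithLp (toLp)

lemma orthonormal_toLp_iff {ι n : Type*} [DecidableEq ι] [Fintype n] {u : ι → n → ℝ} :
    Orthonormal ℝ (fun k => toLp 2 (u k) : ι → EuclideanSpace ℝ n) ↔
      ∀ i j, u i ⬝ᵥ u j = if i = j then 1 else 0 := by
  simp only [orthonormal_iff_ite, EuclideanSpace.inner_toLp_toLp, star_trivial, dotProduct_comm]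

lemma trace_transpose_mul_self_eq_sum_norm_sq {m n : Type*} [Fintype m] [Fintype n]
    (M : Matrix m n ℝ) : trace (Mᵀ * M) = ∑ i, ‖toLp 2 (M i)‖ ^ 2 := by
  simp only [EuclideanSpace.real_norm_sq_eq]
  simp only [trace, Matrix.diag, mul_apply, transpose_apply, sq]
  exact Finset.sum_comm

lemma Matrix.rank_eq_finrank_range_toLpLin {m n R : Type*} [Fintype m] [Fintype n]
    [DecidableEq n] [CommRing R] (X : Matrix m n R) :
    X.rank = Module.finrank R (LinearMap.range (toLpLin 2 2 X)) :=
  X.rank_eq_finrank_range_toLin (PiLp.basisFun 2 R m) (PiLp.basisFun 2 R n)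

lemma sum_smul_vecMulVec_mulVec {ι m n : Type*} [Fintype ι] [DecidableEq ι] [Fintype n]
    (u : ι → m → ℝ) {v : ι → n → ℝ}
    (hv : Orthonormal ℝ (fun k => toLp 2 (v k) : ι → EuclideanSpace ℝ n)) (c : ι → ℝ) (l : ι) :
    (∑ k, c k • vecMulVec (u k) (v k)) *ᵥ v l = c l • u l := by
  rw [orthonormal_toLp_iff] at hv
  simp [sum_mulVec, smul_mulVec, vecMulVec_mulVec, hv]

section Frobenius

variable {p q : ℕ}

lemma frob_sq_eq_trace (M : Matrix (Fin p) (Fin q) ℝ) : frob M ^ 2 = trace (Mᵀ * M) :=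
  Real.sq_sqrt <| trace_transpose_mul_self_eq_sum_norm_sq M ▸ by positivity

lemma frob_sq (M : Matrix (Fin p) (Fin q) ℝ) : frob M ^ 2 = ∑ i, ‖toLp 2 (M i)‖ ^ 2 := by
  rw [frob_sq_eq_trace, trace_transpose_mul_self_eq_sum_norm_sq]

lemma sum_norm_sq_mulVec_le_frob_sq {ι : Type*} [Fintype ι] (M : Matrix (Fin p) (Fin q) ℝ)
    {v : ι → Fin q → ℝ}
    (hv : Orthonormal ℝ (fun k => toLp 2 (v k) : ι → EuclideanSpace ℝ (Fin q))) :
    ∑ k, ‖toLp 2 (M *ᵥ v k)‖ ^ 2 ≤ frob M ^ 2 := by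
  have hentry (k : ι) (i : Fin p) :
      (M *ᵥ v k) i ^ 2 = ‖inner ℝ (toLp 2 (v k)) (toLp 2 (M i))‖ ^ 2 := by
    rw [Real.norm_eq_abs, sq_abs, EuclideanSpace.inner_toLp_toLp, star_trivial, mulVec]
  calc ∑ k, ‖toLp 2 (M *ᵥ v k)‖ ^ 2
      = ∑ i, ∑ k, ‖inner ℝ (toLp 2 (v k)) (toLp 2 (M i))‖ ^ 2 := by
        simp only [EuclideanSpace.real_norm_sq_eq, hentry]
        exact Finset.sum_comm
    _ ≤ ∑ i, ‖toLp 2 (M i)‖ ^ 2 := Finset.sum_le_sum fun i _ => hv.sum_inner_products_le _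
    _ = frob M ^ 2 := (frob_sq M).symm

lemma frob_sq_sum_smul_vecMulVec {ι : Type*} [Fintype ι] [DecidableEq ι]
    {u : ι → Fin p → ℝ} {v : ι → Fin q → ℝ}
    (hu : Orthonormal ℝ (fun k => toLp 2 (u k) : ι → EuclideanSpace ℝ (Fin p)))
    (hv : Orthonormal ℝ (fun k => toLp 2 (v k) : ι → EuclideanSpace ℝ (Fin q))) (c : ι → ℝ) :
    frob (∑ k, c k • vecMulVec (u k) (v k)) ^ 2 = ∑ k, c k ^ 2 := by
  rw [orthonormal_toLp_iff] at hu hv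
  rw [frob_sq_eq_trace, transpose_sum, Matrix.sum_mul]
  simp_rw [Matrix.mul_sum, transpose_smul, Matrix.smul_mul, Matrix.mul_smul, transpose_vecMulVec,
    vecMulVec_mul_vecMulVec, trace_sum, trace_smul, trace_vecMulVec, hu, dotProduct_smul, hv]
  simp [sq]

end Frobenius

section Projection

variable {E : Type*} [NormedAddCommGroup E] [InnerProductSpace ℝ E]

lemma norm_sq_sub_norm_sq_starProjection_le (K : Submodule ℝ E) [K.HasOrthogonalProjection]
    (x : E) {y : E} (hy : y ∈ K) : ‖x‖ ^ 2 - ‖K.starProjection x‖ ^ 2 ≤ ‖x - y‖ ^ 2 := by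
  have hmin : ‖x - K.starProjection x‖ ≤ ‖x - y‖ := by
    rw [Submodule.starProjection_minimal]
    exact ciInf_le ⟨0, Set.forall_mem_range.2 fun _ => norm_nonneg _⟩ (⟨y, hy⟩ : K)
  have hpyth := K.norm_sq_eq_add_norm_sq_starProjection x
  rw [Submodule.starProjection_orthogonal_val] at hpyth
  nlinarith [norm_nonneg (x - K.starProjection x)]

lemma sum_norm_sq_starProjection_le_finrank {ι : Type*} [Fintype ι] (K : Submodule ℝ E)
    [FiniteDimensional ℝ K] {u : ι → E} (hu : Orthonormal ℝ u) :
    ∑ k, ‖K.starProjection (u k)‖ ^ 2 ≤ Module.finrank ℝ K := by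
  set b := stdOrthonormalBasis ℝ K
  have hproj (x : E) : ‖K.starProjection x‖ ^ 2 = ∑ i, ‖inner ℝ x (b i : E)‖ ^ 2 := by
    change ‖K.orthogonalProjectionOnto x‖ ^ 2 = _
    rw [← b.sum_sq_norm_inner_right]
    simp [real_inner_comm]
  calc ∑ k, ‖K.starProjection (u k)‖ ^ 2 = ∑ i, ∑ k, ‖inner ℝ (u k) (b i : E)‖ ^ 2 := by
        simp only [hproj]
        exact Finset.sum_comm
    _ ≤ ∑ i, ‖(b i : E)‖ ^ 2 := Finset.sum_le_sum fun i _ => hu.sum_inner_products_le _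
    _ = Module.finrank ℝ K := by simp [show ∀ i, ‖(b i : E)‖ = 1 from b.norm_eq_one]

end Projection

lemma sum_tail_le_sum_mul_one_sub {I r : ℕ} {w t : Fin I → ℝ} (hw0 : ∀ k, 0 ≤ w k)
    (hw : Antitone w) (ht0 : ∀ k, 0 ≤ t k) (ht1 : ∀ k, t k ≤ 1) (ht : ∑ k, t k ≤ r) :
    (∑ k : Fin I, if r ≤ (k : ℕ) then w k else 0) ≤ ∑ k, w k * (1 - t k) := by
  rcases lt_or_ge r I with hrI | hIr
  · -- `s` separates the head `k < r` of `w` from its tail.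
    set s := w ⟨r, hrI⟩
    have hterm (k : Fin I) : (if r ≤ (k : ℕ) then w k else 0) - w k * (1 - t k)
        ≤ s * (t k - if (k : ℕ) < r then 1 else 0) := by
      split_ifs with h₁ h₂ h₂
      · omega
      · nlinarith [hw (show ⟨r, hrI⟩ ≤ k from h₁), ht0 k]
      · nlinarith [hw (show k ≤ ⟨r, hrI⟩ from Fin.le_def.2 (by dsimp only; omega)), ht1 k]
      · omega
    have hcount : (∑ k : Fin I, if (k : ℕ) < r then (1 : ℝ) else 0) = r := by
      rw [Finset.sum_boole, Fin.card_filter_val_lt, min_eq_right hrI.le]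
    have hsum := Finset.sum_le_sum (s := univ) fun k _ => hterm k
    rw [Finset.sum_sub_distrib, ← Finset.mul_sum, Finset.sum_sub_distrib, hcount] at hsum
    nlinarith [hw0 ⟨r, hrI⟩]
  · refine Finset.sum_le_sum fun k _ => ?_
    rw [if_neg (by omega)]
    exact mul_nonneg (hw0 k) (by linarith [ht1 k])

theorem sum_tail_sq_le_frob_sq_sub {I m n r : ℕ} {u : Fin I → Fin m → ℝ} {v : Fin I → Fin n → ℝ}
    (hu : Orthonormal ℝ (fun k => toLp 2 (u k) : Fin I → EuclideanSpace ℝ (Fin m)))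
    (hv : Orthonormal ℝ (fun k => toLp 2 (v k) : Fin I → EuclideanSpace ℝ (Fin n)))
    {σ : Fin I → ℝ} (hσ0 : ∀ k, 0 ≤ σ k) (hσ : Antitone σ)
    {X : Matrix (Fin m) (Fin n) ℝ} (hX : X.rank ≤ r) :
    (∑ k : Fin I, if r ≤ (k : ℕ) then σ k ^ 2 else 0)
      ≤ frob (∑ k, σ k • vecMulVec (u k) (v k) - X) ^ 2 := by
  set A := ∑ k, σ k • vecMulVec (u k) (v k)
  set K := LinearMap.range (toLpLin 2 2 X)
  set t : Fin I → ℝ := fun k => ‖K.starProjection (toLp 2 (u k))‖ ^ 2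
  have ht1 (k : Fin I) : t k ≤ 1 := by
    simpa [t, hu.1 k] using
      pow_le_pow_left₀ (norm_nonneg _) (K.norm_starProjection_apply_le (toLp 2 (u k))) 2
  have ht : ∑ k, t k ≤ r := by
    grw [sum_norm_sq_starProjection_le_finrank K hu, ← X.rank_eq_finrank_range_toLpLin]
    exact_mod_cast hX
  have hcol (k : Fin I) : σ k ^ 2 * (1 - t k) ≤ ‖toLp 2 ((A - X) *ᵥ v k)‖ ^ 2 := by
    have hXv : toLp 2 (X *ᵥ v k) ∈ K := LinearMap.mem_range_self _ (toLp 2 (v k))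
    have h := norm_sq_sub_norm_sq_starProjection_le K (σ k • toLp 2 (u k)) hXv
    rw [map_smul, norm_smul, norm_smul, hu.1 k] at h
    rw [sub_mulVec, sum_smul_vecMulVec_mulVec u hv]
    convert h using 1
    · simp only [t, Real.norm_eq_abs, mul_pow, sq_abs]; ring
    · rfl
  calc (∑ k : Fin I, if r ≤ (k : ℕ) then σ k ^ 2 else 0)
      ≤ ∑ k, σ k ^ 2 * (1 - t k) :=
        sum_tail_le_sum_mul_one_sub (fun k => sq_nonneg _)
          (fun _ _ hkl => pow_le_pow_left₀ (hσ0 _) (hσ hkl) 2) (fun k => sq_nonneg _) ht1 ht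
    _ ≤ ∑ k, ‖toLp 2 ((A - X) *ᵥ v k)‖ ^ 2 := Finset.sum_le_sum fun k _ => hcol k
    _ ≤ frob (A - X) ^ 2 := sum_norm_sq_mulVec_le_frob_sq _ hv

theorem stmt13_general {m n I r : ℕ}
    (u : Fin I → Fin m → ℝ) (v : Fin I → Fin n → ℝ) (σ : Fin I → ℝ)
    (hu : ∀ i j, u i ⬝ᵥ u j = if i = j then (1 : ℝ) else 0)
    (hv : ∀ i j, v i ⬝ᵥ v j = if i = j then (1 : ℝ) else 0)
    (hσpos : ∀ k, 0 < σ k) (hσdec : Antitone σ)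
    (A : Matrix (Fin m) (Fin n) ℝ)
    (hA : A = ∑ k : Fin I, σ k • Matrix.vecMulVec (u k) (v k)) :
    (∀ X : Matrix (Fin m) (Fin n) ℝ, X.rank ≤ r →
      frob (A - ∑ k : Fin I, if (k : ℕ) < r then σ k • Matrix.vecMulVec (u k) (v k) else 0)
        ≤ frob (A - X)) ∧
    frob (A - ∑ k : Fin I, if (k : ℕ) < r then σ k • Matrix.vecMulVec (u k) (v k) else 0) ^ 2
      = ∑ k : Fin I, if r ≤ (k : ℕ) then σ k ^ 2 else 0 := by
  rw [← orthonormal_toLp_iff] at hu hv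
  have htail : A - ∑ k : Fin I, (if (k : ℕ) < r then σ k • vecMulVec (u k) (v k) else 0)
      = ∑ k : Fin I, (if r ≤ (k : ℕ) then σ k else 0) • vecMulVec (u k) (v k) := by
    rw [hA, ← Finset.sum_sub_distrib]
    refine Finset.sum_congr rfl fun k _ => ?_
    by_cases hk : (k : ℕ) < r <;> simp [hk, not_le.2, not_lt.1]
  have herr : frob (A - ∑ k : Fin I, if (k : ℕ) < r then σ k • vecMulVec (u k) (v k) else 0) ^ 2
      = ∑ k : Fin I, if r ≤ (k : ℕ) then σ k ^ 2 else 0 := by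
    rw [htail, frob_sq_sum_smul_vecMulVec hu hv]
    simp [ite_pow]
  refine ⟨fun X hX => le_of_pow_le_pow_left₀ two_ne_zero (Real.sqrt_nonneg _) ?_, herr⟩
  rw [herr, hA]
  exact sum_tail_sq_le_frob_sq_sub hu hv (fun k => (hσpos k).le) hσdec hX

/-- Eckart–Young: the rank-r truncated SVD minimizes the Frobenius
distance over matrices of rank at most r, with squared error ∑_{k>r} σ_k². -/
theorem stmt13 {m n I r : ℕ}
    (u : Fin I → Fin m → ℝ) (v : Fin I → Fin n → ℝ) (σ : Fin I → ℝ)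
    (hu : ∀ i j, u i ⬝ᵥ u j = if i = j then (1 : ℝ) else 0)
    (hv : ∀ i j, v i ⬝ᵥ v j = if i = j then (1 : ℝ) else 0)
    (hσpos : ∀ k, 0 < σ k) (hσdec : Antitone σ)
    (hIr : r < I)
    (A : Matrix (Fin m) (Fin n) ℝ)
    (hA : A = ∑ k : Fin I, σ k • Matrix.vecMulVec (u k) (v k)) :
    (∀ X : Matrix (Fin m) (Fin n) ℝ, X.rank ≤ r →
      frob (A - ∑ k : Fin I, if (k : ℕ) < r then σ k • Matrix.vecMulVec (u k) (v k) else 0)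
        ≤ frob (A - X)) ∧
    frob (A - ∑ k : Fin I, if (k : ℕ) < r then σ k • Matrix.vecMulVec (u k) (v k) else 0) ^ 2
      = ∑ k : Fin I, if r ≤ (k : ℕ) then σ k ^ 2 else 0 :=
  stmt13_general u v σ hu hv hσpos hσdec A hA
end

section
/- Let 𝒜 = e₁⊗e₁ + e₃⊗e₃ ∈ ℝ^{n×n} (n ≥ 3), f(X) = ‖X − 𝒜‖_F², α ∈ (0,1), and define the sequence X_t = e₁e₁ᵀ + (1−α)ᵗ e₂e₂ᵀ. Then every X_t has rank 2, X_t converges to X* = e₁e₁ᵀ which has rank 1, f is smooth, and ∇f(X*) = 2(X* − 𝒜) ≠ 0; in particular the limit X* of the rank-2 sequence is not a point where the Euclidean gradient of f vanishes, even though each X_t lies in the variety {rank ≤ 2}. -/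
open Matrix Filter

attribute [local instance] Matrix.frobeniusNormedAddCommGroup Matrix.frobeniusNormedSpace

private lemma fro_sq {n : ℕ} (M : Matrix (Fin n) (Fin n) ℝ) :
    ‖M‖ ^ 2 = ∑ p : Fin n × Fin n, (M p.1 p.2) ^ 2 := by
  rw [Matrix.frobenius_norm_def, ← Real.sqrt_eq_rpow,
    Real.sq_sqrt (by positivity), Fintype.sum_prod_type]
  simp [sq_abs]

private noncomputable def entryCLM {n : ℕ} (i j : Fin n) :
    Matrix (Fin n) (Fin n) ℝ →L[ℝ] ℝ :=
  LinearMap.toContinuousLinearMap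
    { toFun := fun Y => Y i j, map_add' := fun _ _ => rfl, map_smul' := fun _ _ => rfl }

@[simp] private lemma entryCLM_apply {n : ℕ} (i j : Fin n) (Y : Matrix (Fin n) (Fin n) ℝ) :
    entryCLM i j Y = Y i j := rfl

private lemma hasFDeriv {n : ℕ} (A X0 : Matrix (Fin n) (Fin n) ℝ) :
    HasFDerivAt (fun Y : Matrix (Fin n) (Fin n) ℝ => ‖Y - A‖ ^ 2)
      (∑ p : Fin n × Fin n, (2 * (X0 p.1 p.2 - A p.1 p.2)) • entryCLM p.1 p.2) X0 := by
  have hf : (fun Y : Matrix (Fin n) (Fin n) ℝ => ‖Y - A‖ ^ 2)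
      = fun Y => ∑ p : Fin n × Fin n, (Y p.1 p.2 - A p.1 p.2) ^ 2 := by
    funext Y
    simpa [Matrix.sub_apply] using fro_sq (Y - A)
  rw [hf]
  apply HasFDerivAt.fun_sum
  intro p _
  have h : HasFDerivAt (fun Y : Matrix (Fin n) (Fin n) ℝ => Y p.1 p.2 - A p.1 p.2)
      (entryCLM p.1 p.2) X0 := by
    exact ((entryCLM p.1 p.2).hasFDerivAt (x := X0)).sub_const (A p.1 p.2)
  have h2 := h.mul h
  rw [show (2 * (X0 p.1 p.2 - A p.1 p.2)) • entryCLM p.1 p.2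
      = (X0 p.1 p.2 - A p.1 p.2) • entryCLM p.1 p.2
        + (X0 p.1 p.2 - A p.1 p.2) • entryCLM p.1 p.2 from by rw [two_mul, add_smul]]
  simp only [pow_two]
  exact h2

private lemma smooth_f {n : ℕ} (A : Matrix (Fin n) (Fin n) ℝ) :
    ContDiff ℝ (⊤ : ℕ∞) (fun Y : Matrix (Fin n) (Fin n) ℝ => ‖Y - A‖ ^ 2) := by
  have hf : (fun Y : Matrix (Fin n) (Fin n) ℝ => ‖Y - A‖ ^ 2)
      = fun Y => ∑ p : Fin n × Fin n, (Y p.1 p.2 - A p.1 p.2) ^ 2 := by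
    funext Y
    simpa [Matrix.sub_apply] using fro_sq (Y - A)
  rw [hf]
  apply ContDiff.sum
  intro p _
  exact (((entryCLM p.1 p.2).contDiff).sub contDiff_const).pow 2


/-- the matrix 'apocalypse' example: the rank-2 sequence
X_t = e₁e₁ᵀ + (1−α)ᵗ e₂e₂ᵀ converges to the rank-1 matrix X* = e₁e₁ᵀ, the objective
f(X) = ‖X − 𝒜‖_F² (with 𝒜 = e₁e₁ᵀ + e₃e₃ᵀ) is smooth, yet its Euclidean gradient at X*,
namely 2(X* − 𝒜) (identified through the Frobenius inner product), is nonzero. -/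
theorem stmt19 (n : ℕ) (hn : 3 ≤ n) (α : ℝ) (hα : 0 < α ∧ α < 1) :
    let e1 : Fin n := ⟨0, by omega⟩
    let e2 : Fin n := ⟨1, by omega⟩
    let e3 : Fin n := ⟨2, by omega⟩
    let A : Matrix (Fin n) (Fin n) ℝ :=
      Matrix.single e1 e1 1 + Matrix.single e3 e3 1
    let X : ℕ → Matrix (Fin n) (Fin n) ℝ := fun t =>
      Matrix.single e1 e1 1 + (1 - α) ^ t • Matrix.single e2 e2 1
    let Xstar : Matrix (Fin n) (Fin n) ℝ := Matrix.single e1 e1 1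
    let f : Matrix (Fin n) (Fin n) ℝ → ℝ := fun Y => ‖Y - A‖ ^ 2
    (∀ t, (X t).rank = 2) ∧
    (∀ t, X t ∈ {Y : Matrix (Fin n) (Fin n) ℝ | Y.rank ≤ 2}) ∧
    Tendsto X atTop (nhds Xstar) ∧
    Xstar.rank = 1 ∧
    ContDiff ℝ (⊤ : ℕ∞) f ∧
    (∀ H : Matrix (Fin n) (Fin n) ℝ,
      fderiv ℝ f Xstar H = Matrix.trace (((2 : ℝ) • (Xstar - A))ᵀ * H)) ∧
    (2 : ℝ) • (Xstar - A) ≠ 0 := by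
  intro e1 e2 e3 A X Xstar f
  obtain ⟨hα0, hα1⟩ := hα
  have h12 : e1 ≠ e2 := by simp [e1, e2, Fin.ext_iff]
  have hpow : ∀ t : ℕ, (1 - α) ^ t ≠ 0 := fun t => pow_ne_zero t (by linarith)
  -- diagonal representation of X t
  have hXdiag : ∀ t, X t = Matrix.diagonal
      (fun i => if i = e1 then (1 : ℝ) else if i = e2 then (1 - α) ^ t else 0) := by
    intro t
    ext i j
    simp only [X, Matrix.add_apply, Matrix.smul_apply, Matrix.single, Matrix.of_apply,
      Matrix.diagonal_apply, smul_eq_mul, e1, e2, Fin.ext_iff, Fin.val_zero, Fin.val_one]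
    split_ifs <;> first | (exfalso; omega) | ring
  have hXstardiag : Xstar = Matrix.diagonal
      (fun i => if i = e1 then (1 : ℝ) else 0) := by
    ext i j
    simp only [Xstar, Matrix.single, Matrix.of_apply, Matrix.diagonal_apply,
      e1, Fin.ext_iff, Fin.val_zero]
    split_ifs <;> first | (exfalso; omega) | ring
  have hrank2 : ∀ t, (X t).rank = 2 := by
    intro t
    rw [hXdiag t, Matrix.rank_diagonal]
    have he : ∀ i : Fin n,
        (if i = e1 then (1 : ℝ) else if i = e2 then (1 - α) ^ t else 0) ≠ 0
          ↔ i ∈ ({e1, e2} : Finset (Fin n)) := by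
      intro i
      by_cases h1 : i = e1
      · simp [h1]
      · by_cases h2 : i = e2 <;> simp [h1, h2, h12, Ne.symm h12, hpow t]
    rw [Fintype.card_congr (Equiv.subtypeEquivRight he), Fintype.card_coe,
      Finset.card_pair h12]
  refine ⟨hrank2, fun t => (hrank2 t).le, ?_, ?_, smooth_f A, ?_, ?_⟩
  · -- convergence
    have h1 : Tendsto (fun t : ℕ => (1 - α) ^ t) atTop (nhds 0) :=
      tendsto_pow_atTop_nhds_zero_of_lt_one (by linarith) (by linarith)
    have h2 := (h1.smul_const (Matrix.single e2 e2 (1 : ℝ))).const_add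
      (Matrix.single e1 e1 (1 : ℝ))
    simpa [X, Xstar] using h2
  · -- rank of Xstar
    rw [hXstardiag, Matrix.rank_diagonal]
    have he : ∀ i : Fin n, (if i = e1 then (1 : ℝ) else 0) ≠ 0 ↔ i = e1 := by
      intro i; by_cases h1 : i = e1 <;> simp [h1]
    rw [Fintype.card_congr (Equiv.subtypeEquivRight he), Fintype.card_subtype_eq]
  · -- fderiv
    intro H
    rw [(hasFDeriv A Xstar).fderiv]
    simp only [ContinuousLinearMap.coe_sum', Finset.sum_apply,
      ContinuousLinearMap.coe_smul', Pi.smul_apply, entryCLM_apply, smul_eq_mul]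
    rw [Matrix.trace]
    simp only [Matrix.diag, Matrix.mul_apply, Matrix.transpose_apply, Matrix.smul_apply,
      Matrix.sub_apply, smul_eq_mul]
    rw [Fintype.sum_prod_type, Finset.sum_comm]
  · -- nonzero gradient
    intro hcontra
    have hc := congrFun (congrFun hcontra e3) e3
    simp only [Matrix.smul_apply, Matrix.sub_apply, Xstar, A, Matrix.add_apply,
      Matrix.single, Matrix.of_apply, Matrix.zero_apply, smul_eq_mul,
      e1, e3, Fin.ext_iff, Fin.val_zero] at hc
    norm_num at hc
end
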